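/- Let d ≥ 5 and let u ∈ Ḣ²(ℝ^d) satisfy ‖Δu‖_{L²} < ‖ΔW‖_{L²} and E(u) ≤ (1-δ₀) E(W) for some δ₀ > 0. Then there exists δ̄ = δ̄(δ₀, d) > 0 such that ∫(|Δu|² - |u|^{2d/(d-4)}) dx ≥ δ̄ ∫|Δu|² dx, and in particular E(u) ≥ 0. -/

import Mathlib

/-!
Raising the Sobolev inequality to the power `2d/(d-4)` gives `P ≤ (K/K_W)^{4/(d-4)} K`, where
`K_W = C_d^{-d/2} = ‖ΔW‖₂²`. Below the threshold `K < K_W` this yields `P ≤ K`, hence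
`E(u) ≥ (2/d) K ≥ 0`; comparing with `E(u) ≤ (1-δ₀) E(W) = (1-δ₀)(2/d) K_W` gives
`K ≤ (1-δ₀) K_W`, and feeding this back in yields `P ≤ (1-δ₀)^{4/(d-4)} K`, i.e.
`δ̄ = 1 - (1-δ₀)^{4/(d-4)}` (with `δ₀` capped at `1`).
-/

open Real

section

variable {d C K P : ℝ}

theorem le_rpow_div_mul_of_sobolev (hd : 4 < d) (hC : 0 < C) (hK : 0 ≤ K) (hP : 0 ≤ P)
    (hSob : P ^ ((d - 4) / (2 * d)) ≤ C * K ^ ((1 : ℝ) / 2)) :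
    P ≤ (K / C ^ (-d / 2)) ^ (4 / (d - 4)) * K := by
  have hd4 : 0 < d - 4 := by linarith
  have hs : 0 < (d - 4) / (2 * d) := by positivity
  have hraised := rpow_le_rpow (rpow_nonneg hP _) hSob (inv_pos.2 hs).le
  rw [← rpow_mul hP, mul_inv_cancel₀ hs.ne', rpow_one,
    mul_rpow hC.le (rpow_nonneg hK _), ← rpow_mul hK] at hraised
  have hCexp : -(-d / 2 * (4 / (d - 4))) = ((d - 4) / (2 * d))⁻¹ := by field_simp; ring
  have hKexp : 1 / 2 * ((d - 4) / (2 * d))⁻¹ = 4 / (d - 4) + 1 := by field_simp; ring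
  rw [hKexp, rpow_add' hK (by positivity), rpow_one, ← hCexp, rpow_neg hC.le, rpow_mul hC.le] at hraised
  rw [div_rpow hK (rpow_nonneg hC.le _)]
  convert hraised using 1
  ring

theorem le_rpow_mul_of_sobolev_of_le (hd : 4 < d) (hC : 0 < C) (hK : 0 ≤ K) (hP : 0 ≤ P)
    (hSob : P ^ ((d - 4) / (2 * d)) ≤ C * K ^ ((1 : ℝ) / 2)) {θ : ℝ} (hθ : K ≤ θ * C ^ (-d / 2)) :
    P ≤ θ ^ (4 / (d - 4)) * K := by
  have hratio : K / C ^ (-d / 2) ≤ θ := (div_le_iff₀ (rpow_pos_of_pos hC _)).2 hθ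
  calc P ≤ (K / C ^ (-d / 2)) ^ (4 / (d - 4)) * K := le_rpow_div_mul_of_sobolev hd hC hK hP hSob
    _ ≤ θ ^ (4 / (d - 4)) * K := by gcongr

theorem two_div_mul_le_energy (hd : 4 < d) (hPK : P ≤ K) :
    2 / d * K ≤ K / 2 - (d - 4) / (2 * d) * P := by
  have hd0 : 0 < d := by linarith
  have hc : 0 ≤ (d - 4) / (2 * d) := div_nonneg (by linarith) (by positivity)
  have hK : K / 2 - (d - 4) / (2 * d) * K = 2 / d * K := by field_simp; ring
  linarith [mul_le_mul_of_nonneg_left hPK hc]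

end

/-- Energy trapping, second part. With `K = ∫|Δu|²`, `P = ∫|u|^{2d/(d−4)}`, the
Sobolev inequality `P^{(d−4)/(2d)} ≤ C_d K^{1/2}`, `‖ΔW‖₂² = C_d^{−d/2}` and
`E(W) = (2/d) C_d^{−d/2}`: if `K < ‖ΔW‖₂²` and `E(u) ≤ (1−δ₀)E(W)`, then
`∫(|Δu|² − |u|^{2d/(d−4)}) ≥ δ̄ ∫|Δu|²` for some `δ̄ = δ̄(δ₀,d) > 0`, and in
particular `E(u) ≥ 0`. -/
theorem energy_trapping_coercivity (d : ℕ) (hd : 5 ≤ d) (Cd : ℝ) (hCd : 0 < Cd)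
    (δ₀ : ℝ) (hδ₀ : 0 < δ₀) :
    ∃ δb > (0 : ℝ), ∀ K P : ℝ, 0 ≤ K → 0 ≤ P →
      P ^ (((d : ℝ) - 4) / (2 * (d : ℝ))) ≤ Cd * K ^ ((1 : ℝ) / 2) →
      K < Cd ^ (-(d : ℝ) / 2) →
      K / 2 - ((d : ℝ) - 4) / (2 * (d : ℝ)) * P ≤
        (1 - δ₀) * (2 / (d : ℝ) * Cd ^ (-(d : ℝ) / 2)) →
      δb * K ≤ K - P ∧ 0 ≤ K / 2 - ((d : ℝ) - 4) / (2 * (d : ℝ)) * P := by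
  have hd4 : (4 : ℝ) < d := by exact_mod_cast hd
  set θ : ℝ := 1 - min δ₀ 1
  have hθ0 : 0 ≤ θ := sub_nonneg.2 (min_le_right _ _)
  have hθ1 : θ < 1 := sub_lt_self _ (lt_min hδ₀ one_pos)
  refine ⟨1 - θ ^ (4 / ((d : ℝ) - 4)), sub_pos.2 (rpow_lt_one hθ0 hθ1 (div_pos four_pos (sub_pos.2 hd4))), ?_⟩
  intro K P hK hP hSob hKlt hE
  have hPK : P ≤ K := by
    simpa using le_rpow_mul_of_sobolev_of_le hd4 hCd hK hP hSob (θ := 1) (by linarith)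
  have hlow := two_div_mul_le_energy hd4 hPK
  have hKθ : K ≤ θ * Cd ^ (-(d : ℝ) / 2) := by
    have hKs : 0 < Cd ^ (-(d : ℝ) / 2) := rpow_pos_of_pos hCd _
    have hKδ : K ≤ (1 - δ₀) * Cd ^ (-(d : ℝ) / 2) :=
      le_of_mul_le_mul_left (by linarith : 2 / (d : ℝ) * K ≤ 2 / d * ((1 - δ₀) * Cd ^ (-(d : ℝ) / 2)))
        (by positivity)
    exact hKδ.trans (mul_le_mul_of_nonneg_right (by linarith [min_le_left δ₀ 1]) hKs.le)
  have hPθ := le_rpow_mul_of_sobolev_of_le hd4 hCd hK hP hSob hKθ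
  exact ⟨by linarith, (by positivity : (0 : ℝ) ≤ 2 / d * K).trans hlow⟩
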